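/- arXiv:1511.06661 — 2 statements merged into one kernel-verified Lean document; each statement's English description precedes it below -/
import Mathlib

section
/- Let G₁ and G₂ be finite simple graphs with n₁, n₂ vertices and m₁, m₂ edges respectively. Then F(G₁ + G₂) = F(G₁) + F(G₂) + 3n₂M₁(G₁) + 3n₁M₁(G₂) + 6n₂²m₁ + 6n₁²m₂ + n₁n₂³ + n₂n₁³, where G₁ + G₂ is the join of G₁ and G₂. -/
open Finset

/-- Degree of a vertex: the number of its neighbors. -/
noncomputable def degN {V : Type*} (G : SimpleGraph V) (v : V) : ℕ :=
  Nat.card (G.neighborSet v)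

/-- F-index: the sum of cubes of the vertex degrees. -/
noncomputable def Findex {V : Type*} [Fintype V] (G : SimpleGraph V) : ℕ :=
  ∑ v, (degN G v) ^ 3

/-- First Zagreb index: the sum of squares of the vertex degrees. -/
noncomputable def zagrebM1 {V : Type*} [Fintype V] (G : SimpleGraph V) : ℕ :=
  ∑ v, (degN G v) ^ 2

/-- Number of edges of a graph. -/
noncomputable def numEdges {V : Type*} (G : SimpleGraph V) : ℕ :=
  Nat.card G.edgeSet

/-- Join of two simple graphs: the disjoint union together with all edges
joining a vertex of the first graph to a vertex of the second. -/
def graphJoin {V₁ V₂ : Type*} (G₁ : SimpleGraph V₁) (G₂ : SimpleGraph V₂) :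
    SimpleGraph (V₁ ⊕ V₂) where
  Adj x y :=
    match x, y with
    | .inl a, .inl b => G₁.Adj a b
    | .inr a, .inr b => G₂.Adj a b
    | _, _ => True
  symm := ⟨by rintro (a | a) (b | b) h <;> first | exact h.symm | trivial⟩
  loopless := ⟨by
    rintro (a | a) h
    · exact G₁.loopless.irrefl a h
    · exact G₂.loopless.irrefl a h⟩

lemma degN_eq_degree {V : Type*} [Fintype V] (G : SimpleGraph V) [DecidableRel G.Adj] (v : V) :
    degN G v = G.degree v := by
  rw [degN, Nat.card_eq_fintype_card, SimpleGraph.card_neighborSet_eq_degree]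

lemma sum_degN_eq_two_mul_numEdges {V : Type*} [Fintype V] (G : SimpleGraph V) :
    ∑ v, degN G v = 2 * numEdges G := by
  classical
  simp only [degN_eq_degree, SimpleGraph.sum_degrees_eq_twice_card_edges,
    SimpleGraph.edgeFinset_card, numEdges, Nat.card_eq_fintype_card]

section graphJoin

variable {V₁ V₂ : Type*} [Finite V₁] [Finite V₂] (G₁ : SimpleGraph V₁) (G₂ : SimpleGraph V₂)

lemma degN_graphJoin_inl (a : V₁) :
    degN (graphJoin G₁ G₂) (.inl a) = degN G₁ a + Nat.card V₂ := by
  have e : (graphJoin G₁ G₂).neighborSet (.inl a) ≃ G₁.neighborSet a ⊕ V₂ :=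
    Equiv.subtypeSum.trans (Equiv.sumCongr (.refl _) (Equiv.subtypeUnivEquiv fun _ => trivial))
  rw [degN, Nat.card_congr e, Nat.card_sum, degN]

lemma degN_graphJoin_inr (b : V₂) :
    degN (graphJoin G₁ G₂) (.inr b) = degN G₂ b + Nat.card V₁ := by
  have e : (graphJoin G₁ G₂).neighborSet (.inr b) ≃ G₂.neighborSet b ⊕ V₁ :=
    (Equiv.subtypeSum.trans
      (Equiv.sumCongr (Equiv.subtypeUnivEquiv fun _ => trivial) (.refl _))).trans
      (Equiv.sumComm _ _)
  rw [degN, Nat.card_congr e, Nat.card_sum, degN]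

end graphJoin

lemma sum_add_const_pow_three {ι R : Type*} [CommSemiring R] (s : Finset ι) (f : ι → R)
    (n : R) :
    ∑ i ∈ s, (f i + n) ^ 3 = ∑ i ∈ s, f i ^ 3 + 3 * n * ∑ i ∈ s, f i ^ 2
      + 3 * n ^ 2 * ∑ i ∈ s, f i + s.card * n ^ 3 := by
  have expand : ∀ i, (f i + n) ^ 3 = f i ^ 3 + 3 * n * f i ^ 2 + 3 * n ^ 2 * f i + n ^ 3 :=
    fun i => by ring
  simp only [expand, sum_add_distrib, ← mul_sum, sum_const, nsmul_eq_mul]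

theorem Findex_join {V₁ V₂ : Type*} [Fintype V₁] [Fintype V₂]
    (G₁ : SimpleGraph V₁) (G₂ : SimpleGraph V₂)
    (n₁ n₂ m₁ m₂ : ℕ) (hn₁ : Fintype.card V₁ = n₁) (hn₂ : Fintype.card V₂ = n₂)
    (hm₁ : numEdges G₁ = m₁) (hm₂ : numEdges G₂ = m₂) :
    Findex (graphJoin G₁ G₂) =
      Findex G₁ + Findex G₂ + 3 * n₂ * zagrebM1 G₁ + 3 * n₁ * zagrebM1 G₂
        + 6 * n₂ ^ 2 * m₁ + 6 * n₁ ^ 2 * m₂ + n₁ * n₂ ^ 3 + n₂ * n₁ ^ 3 := by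
  subst hn₁ hn₂ hm₁ hm₂
  rw [Findex, Fintype.sum_sum_type]
  simp only [degN_graphJoin_inl, degN_graphJoin_inr, Nat.card_eq_fintype_card,
    sum_add_const_pow_three, sum_degN_eq_two_mul_numEdges, card_univ, Nat.cast_id]
  rw [Findex, Findex, zagrebM1, zagrebM1]
  ring
end

section
/- Let G₁, G₂ be finite simple graphs with distinguished vertices v₁ ∈ V(G₁), v₂ ∈ V(G₂). Then the F-index of the splice (G₁ • G₂)(v₁,v₂) equals F(G₁) + F(G₂) + 3d_{G₁}(v₁)d_{G₂}(v₂)(d_{G₁}(v₁) + d_{G₂}(v₂)), and the F-index of the link (G₁ ∼ G₂)(v₁,v₂) equals F(G₁) + F(G₂) + 3(d_{G₁}(v₁) + d_{G₂}(v₂)) + 3(d_{G₁}(v₁)² + d_{G₂}(v₂)²) + 2. -/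
open Finset

/-- Adjacency relation for the splice of two graphs at `v₁` and `v₂`,
where the identified vertex is represented by `Sum.inl v₁`. -/
def spliceAdj {V₁ V₂ : Type*} (G₁ : SimpleGraph V₁) (G₂ : SimpleGraph V₂)
    (v₁ : V₁) (v₂ : V₂) : V₁ ⊕ V₂ → V₁ ⊕ V₂ → Prop
  | .inl a, .inl b => G₁.Adj a b
  | .inr a, .inr b => G₂.Adj a b
  | .inl a, .inr b => a = v₁ ∧ G₂.Adj v₂ b
  | .inr a, .inl b => b = v₁ ∧ G₂.Adj v₂ a

/-- Splice of `G₁` and `G₂` at `v₁`, `v₂`: identify `v₁` and `v₂` in the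
disjoint union.  The vertex `Sum.inr v₂` is removed and `Sum.inl v₁` plays the
role of the identified vertex. -/
def graphSplice {V₁ V₂ : Type*} (G₁ : SimpleGraph V₁) (G₂ : SimpleGraph V₂)
    (v₁ : V₁) (v₂ : V₂) : SimpleGraph {x : V₁ ⊕ V₂ // x ≠ Sum.inr v₂} where
  Adj x y := spliceAdj G₁ G₂ v₁ v₂ x.1 y.1
  symm := by
    constructor
    rintro ⟨(a | a), _⟩ ⟨(b | b), _⟩ h
    · exact h.symm
    · exact h
    · exact h
    · exact h.symm
  loopless := by
    constructor
    rintro ⟨(a | a), _⟩ h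
    · exact G₁.loopless.irrefl a h
    · exact G₂.loopless.irrefl a h

/-- Link of `G₁` and `G₂` at `v₁`, `v₂`: the disjoint union together with the
single edge joining `v₁` and `v₂`. -/
def graphLink {V₁ V₂ : Type*} (G₁ : SimpleGraph V₁) (G₂ : SimpleGraph V₂)
    (v₁ : V₁) (v₂ : V₂) : SimpleGraph (V₁ ⊕ V₂) where
  Adj x y :=
    match x, y with
    | .inl a, .inl b => G₁.Adj a b
    | .inr a, .inr b => G₂.Adj a b
    | .inl a, .inr b => a = v₁ ∧ b = v₂
    | .inr a, .inl b => b = v₁ ∧ a = v₂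
  symm := by
    constructor
    rintro (a | a) (b | b) h
    · exact h.symm
    · exact h
    · exact h
    · exact h.symm
  loopless := by
    constructor
    rintro (a | a) h
    · exact G₁.loopless.irrefl a h
    · exact G₂.loopless.irrefl a h

/-!
`G₁` and `G₂` embed into both the splice and the link, and every embedded vertex keeps its
degree except `v₁` and `v₂`. In the splice the identified vertex has degree `p + q`, where
`p = d(v₁)` and `q = d(v₂)`; summing cubes of degrees over the two embedded copies counts it
twice, so the F-index grows by `(p + q)³ - p³ - q³ = 3pq(p + q)`. In the link the endpoints of
the new edge gain one each, and the F-index grows by `(p + 1)³ - p³ + (q + 1)³ - q³`.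
-/

lemma degN_eq_ncard {V : Type*} (G : SimpleGraph V) (v : V) :
    degN G v = (G.neighborSet v).ncard := rfl

lemma Set.ncard_setOf_and_mem {α : Type*} (p : Prop) [Decidable p] (s : Set α) :
    {x | p ∧ x ∈ s}.ncard = if p then s.ncard else 0 := by
  split_ifs with hp <;> simp [hp]

lemma Finset.sum_pow_add_ite_eq {V R : Type*} [Fintype V] [DecidableEq V] [CommSemiring R]
    (f : V → R) (v : V) (k : R) (n : ℕ) :
    ∑ x, (f x + if x = v then k else 0) ^ n + f v ^ n = ∑ x, f x ^ n + (f v + k) ^ n := by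
  rw [← add_sum_erase _ _ (mem_univ v), ← add_sum_erase _ (f · ^ n) (mem_univ v),
    sum_congr rfl fun x hx => by rw [if_neg (ne_of_mem_erase hx), add_zero]]
  simp only [↓reduceIte]
  ring

lemma SimpleGraph.Embedding.degN_apply_eq_add_ncard {V W U : Type*} [Finite W]
    {G : SimpleGraph V} {H : SimpleGraph U} {G' : SimpleGraph W} (f : G ↪g G') (g : H ↪g G')
    (hcover : Set.range f ∪ Set.range g = Set.univ) (v : V) :
    degN G' (f v) = degN G v + {u | G'.Adj (f v) (g u) ∧ g u ∉ Set.range f}.ncard := by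
  have hinter : G'.neighborSet (f v) ∩ Set.range f = f '' G.neighborSet v := by
    rw [← f.preimage_neighborSet v, Set.image_preimage_eq_inter_range]
  have hdiff : G'.neighborSet (f v) \ Set.range f ⊆ Set.range g := fun w hw =>
    (hcover.symm ▸ Set.mem_univ w : w ∈ Set.range f ∪ Set.range g).resolve_left hw.2
  rw [degN_eq_ncard, degN_eq_ncard, ← Set.ncard_inter_add_ncard_sdiff_eq_ncard _ (Set.range f),
    hinter, Set.ncard_image_of_injective _ f.injective,
    ← Set.ncard_preimage_of_injective_subset_range g.injective hdiff]
  rfl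

section Link

variable {V₁ V₂ : Type*} (G₁ : SimpleGraph V₁) (G₂ : SimpleGraph V₂) (v₁ : V₁) (v₂ : V₂)

@[simp] lemma graphLink_adj_inl_inr {a : V₁} {b : V₂} :
    (graphLink G₁ G₂ v₁ v₂).Adj (.inl a) (.inr b) ↔ a = v₁ ∧ b = v₂ := Iff.rfl

@[simp] lemma graphLink_adj_inr_inl {a : V₂} {b : V₁} :
    (graphLink G₁ G₂ v₁ v₂).Adj (.inr a) (.inl b) ↔ b = v₁ ∧ a = v₂ := Iff.rfl

def linkInl : G₁ ↪g graphLink G₁ G₂ v₁ v₂ where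
  toEmbedding := .inl
  map_rel_iff' := Iff.rfl

def linkInr : G₂ ↪g graphLink G₁ G₂ v₁ v₂ where
  toEmbedding := .inr
  map_rel_iff' := Iff.rfl

@[simp] lemma linkInl_apply (a : V₁) : linkInl G₁ G₂ v₁ v₂ a = .inl a := rfl

@[simp] lemma linkInr_apply (b : V₂) : linkInr G₁ G₂ v₁ v₂ b = .inr b := rfl

variable [Finite V₁] [Finite V₂]

lemma degN_graphLink_inl [DecidableEq V₁] (a : V₁) :
    degN (graphLink G₁ G₂ v₁ v₂) (.inl a) = degN G₁ a + if a = v₁ then 1 else 0 := by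
  refine ((linkInl G₁ G₂ v₁ v₂).degN_apply_eq_add_ncard (linkInr G₁ G₂ v₁ v₂)
    Set.range_inl_union_range_inr a).trans (congrArg _ ?_)
  rw [← Set.ncard_singleton v₂, ← Set.ncard_setOf_and_mem]
  congr 1
  ext b
  simp

lemma degN_graphLink_inr [DecidableEq V₂] (b : V₂) :
    degN (graphLink G₁ G₂ v₁ v₂) (.inr b) = degN G₂ b + if b = v₂ then 1 else 0 := by
  refine ((linkInr G₁ G₂ v₁ v₂).degN_apply_eq_add_ncard (linkInl G₁ G₂ v₁ v₂)
    (Set.union_comm _ _ ▸ Set.range_inl_union_range_inr) b).trans (congrArg _ ?_)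
  rw [← Set.ncard_singleton v₁, ← Set.ncard_setOf_and_mem]
  congr 1
  ext a
  simp [and_comm]

end Link

section Splice

variable {V₁ V₂ : Type*} (G₁ : SimpleGraph V₁) (G₂ : SimpleGraph V₂) (v₁ : V₁) (v₂ : V₂)

@[simp] lemma graphSplice_adj {x y : {x : V₁ ⊕ V₂ // x ≠ .inr v₂}} :
    (graphSplice G₁ G₂ v₁ v₂).Adj x y ↔ spliceAdj G₁ G₂ v₁ v₂ x.1 y.1 := Iff.rfl

def spliceInl : G₁ ↪g graphSplice G₁ G₂ v₁ v₂ where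
  toFun a := ⟨.inl a, Sum.inl_ne_inr⟩
  inj' _ _ h := Sum.inl_injective (congrArg Subtype.val h)
  map_rel_iff' := Iff.rfl

@[simp] lemma spliceInl_apply (a : V₁) : spliceInl G₁ G₂ v₁ v₂ a = ⟨.inl a, Sum.inl_ne_inr⟩ := rfl

variable [DecidableEq V₂]

def spliceInr : G₂ ↪g graphSplice G₁ G₂ v₁ v₂ where
  toFun b := if h : b = v₂ then ⟨.inl v₁, Sum.inl_ne_inr⟩ else ⟨.inr b, by simpa⟩
  inj' b c h := by
    by_cases hb : b = v₂ <;> by_cases hc : c = v₂ <;> simp_all [Subtype.ext_iff]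
  map_rel_iff' {b c} := by
    by_cases hb : b = v₂ <;> by_cases hc : c = v₂ <;> subst_vars <;>
      simp [*, spliceAdj, G₂.adj_comm]

@[simp] lemma spliceInr_self : spliceInr G₁ G₂ v₁ v₂ v₂ = spliceInl G₁ G₂ v₁ v₂ v₁ := dif_pos rfl

lemma spliceInr_of_ne {b : V₂} (hb : b ≠ v₂) :
    spliceInr G₁ G₂ v₁ v₂ b = ⟨.inr b, by simpa⟩ := dif_neg hb

lemma spliceInl_mem_range_spliceInr_iff {a : V₁} :
    spliceInl G₁ G₂ v₁ v₂ a ∈ Set.range (spliceInr G₁ G₂ v₁ v₂) ↔ a = v₁ := by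
  refine ⟨fun ⟨b, hb⟩ => ?_, fun ha => ⟨v₂, ha ▸ spliceInr_self G₁ G₂ v₁ v₂⟩⟩
  by_cases hbv : b = v₂
  · rw [hbv, spliceInr_self] at hb
    exact ((spliceInl G₁ G₂ v₁ v₂).injective hb).symm
  · simp [spliceInr_of_ne G₁ G₂ v₁ v₂ hbv] at hb

lemma range_spliceInl_union_range_spliceInr :
    Set.range (spliceInl G₁ G₂ v₁ v₂) ∪ Set.range (spliceInr G₁ G₂ v₁ v₂) = Set.univ := by
  refine Set.eq_univ_of_forall fun ⟨x, hx⟩ => ?_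
  rcases x with a | b
  · exact .inl ⟨a, rfl⟩
  · exact .inr ⟨b, spliceInr_of_ne G₁ G₂ v₁ v₂ (by simpa using hx)⟩

variable [Finite V₁] [Finite V₂]

lemma degN_graphSplice_spliceInl [DecidableEq V₁] (a : V₁) :
    degN (graphSplice G₁ G₂ v₁ v₂) (spliceInl G₁ G₂ v₁ v₂ a) =
      degN G₁ a + if a = v₁ then degN G₂ v₂ else 0 := by
  rw [(spliceInl G₁ G₂ v₁ v₂).degN_apply_eq_add_ncard (spliceInr G₁ G₂ v₁ v₂)
    (range_spliceInl_union_range_spliceInr G₁ G₂ v₁ v₂) a, degN_eq_ncard G₂,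
    ← Set.ncard_setOf_and_mem]
  congr 2
  ext b
  by_cases hb : b = v₂
  · subst hb
    simp
  · simp [spliceInr_of_ne G₁ G₂ v₁ v₂ hb, spliceAdj]

lemma degN_graphSplice_spliceInr (b : V₂) :
    degN (graphSplice G₁ G₂ v₁ v₂) (spliceInr G₁ G₂ v₁ v₂ b) =
      degN G₂ b + if b = v₂ then degN G₁ v₁ else 0 := by
  rw [(spliceInr G₁ G₂ v₁ v₂).degN_apply_eq_add_ncard (spliceInl G₁ G₂ v₁ v₂)
    (Set.union_comm _ _ ▸ range_spliceInl_union_range_spliceInr G₁ G₂ v₁ v₂) b,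
    degN_eq_ncard G₁, ← Set.ncard_setOf_and_mem]
  congr 2
  ext a
  simp only [Set.mem_ofPred_eq, spliceInl_mem_range_spliceInr_iff]
  by_cases hb : b = v₂
  · subst hb
    simpa [spliceAdj] using fun h => (G₁.ne_of_adj h).symm
  · simp +contextual [spliceInr_of_ne G₁ G₂ v₁ v₂ hb, spliceAdj, hb]

end Splice

lemma sum_graphSplice_add_eq_sum_add_sum {V₁ V₂ M : Type*} [Fintype V₁] [Fintype V₂]
    [DecidableEq V₁] [DecidableEq V₂] [AddCommMonoid M]
    (G₁ : SimpleGraph V₁) (G₂ : SimpleGraph V₂) (v₁ : V₁) (v₂ : V₂)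
    (φ : {x : V₁ ⊕ V₂ // x ≠ .inr v₂} → M) :
    ∑ x, φ x + φ (spliceInr G₁ G₂ v₁ v₂ v₂) =
      ∑ a, φ (spliceInl G₁ G₂ v₁ v₂ a) + ∑ b, φ (spliceInr G₁ G₂ v₁ v₂ b) := by
  set g : V₁ ⊕ V₂ → M := Sum.elim (φ ∘ spliceInl G₁ G₂ v₁ v₂) (φ ∘ spliceInr G₁ G₂ v₁ v₂)
  have hg : ∀ x : {x : V₁ ⊕ V₂ // x ≠ .inr v₂}, g x.1 = φ x := by
    rintro ⟨a | b, hx⟩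
    · rfl
    · exact congrArg φ (spliceInr_of_ne G₁ G₂ v₁ v₂ (by simpa using hx))
  calc ∑ x, φ x + φ (spliceInr G₁ G₂ v₁ v₂ v₂)
      = g (.inr v₂) + ∑ x : {x // x ≠ .inr v₂}, g x.1 := by simp only [hg, add_comm]; rfl
    _ = ∑ y, g y := (Fintype.sum_eq_add_sum_subtype_ne g (.inr v₂)).symm
    _ = _ := Fintype.sum_sum_type g

theorem Findex_splice_and_link {V₁ V₂ : Type*} [Fintype V₁] [Fintype V₂]
    [DecidableEq V₁] [DecidableEq V₂]
    (G₁ : SimpleGraph V₁) (G₂ : SimpleGraph V₂) (v₁ : V₁) (v₂ : V₂) :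
    Findex (graphSplice G₁ G₂ v₁ v₂) =
      Findex G₁ + Findex G₂
        + 3 * degN G₁ v₁ * degN G₂ v₂ * (degN G₁ v₁ + degN G₂ v₂) ∧
    Findex (graphLink G₁ G₂ v₁ v₂) =
      Findex G₁ + Findex G₂
        + 3 * (degN G₁ v₁ + degN G₂ v₂)
        + 3 * ((degN G₁ v₁) ^ 2 + (degN G₂ v₂) ^ 2) + 2 := by
  constructor
  · have h := sum_graphSplice_add_eq_sum_add_sum G₁ G₂ v₁ v₂ (degN (graphSplice G₁ G₂ v₁ v₂) · ^ 3)
    simp only [degN_graphSplice_spliceInl, degN_graphSplice_spliceInr, ↓reduceIte] at h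
    have h₁ := Finset.sum_pow_add_ite_eq (degN G₁) v₁ (degN G₂ v₂) 3
    have h₂ := Finset.sum_pow_add_ite_eq (degN G₂) v₂ (degN G₁ v₁) 3
    unfold Findex
    linarith
  · have h : Findex (graphLink G₁ G₂ v₁ v₂) = _ := Fintype.sum_sum_type _
    simp only [degN_graphLink_inl, degN_graphLink_inr] at h
    have h₁ := Finset.sum_pow_add_ite_eq (degN G₁) v₁ 1 3
    have h₂ := Finset.sum_pow_add_ite_eq (degN G₂) v₂ 1 3
    unfold Findex at *
    linarith
end
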